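/- arXiv:2001.05471 — 3 statements merged into one kernel-verified Lean document; each statement's English description precedes it below -/
import Mathlib

section
/- Let N ≥ 1 and K ≥ 1 be integers and let Δ : ℤ → ℝ be a sequence with Δ_m = 0 for all m ≤ 0 and Δ_i ≥ 1 for all 1 ≤ i ≤ K. Then Σ_{i=1}^{K} [ N·Δ_i(Δ_i + 1)/2 + Δ_i · Σ_{j=1}^{N−1} (N − j)·Δ_{i−j} ] ≤ 2N² · Σ_{i=1}^{K} [ Δ_i²/2 + N·Δ_i ]. -/
open Finset

theorem stmt_6 (N K : ℤ) (hN : 1 ≤ N) (hK : 1 ≤ K) (Δ : ℤ → ℝ)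
    (h0 : ∀ m : ℤ, m ≤ 0 → Δ m = 0)
    (h1 : ∀ i : ℤ, 1 ≤ i → i ≤ K → 1 ≤ Δ i) :
    ∑ i ∈ Finset.Icc (1 : ℤ) K,
        ((N : ℝ) * Δ i * (Δ i + 1) / 2 +
          Δ i * ∑ j ∈ Finset.Icc (1 : ℤ) (N - 1), ((N : ℝ) - (j : ℝ)) * Δ (i - j)) ≤
      2 * (N : ℝ) ^ 2 * ∑ i ∈ Finset.Icc (1 : ℤ) K, ((Δ i) ^ 2 / 2 + (N : ℝ) * Δ i) := by
  have hN' : (1:ℝ) ≤ (N:ℝ) := by exact_mod_cast hN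
  have hnn : ∀ m : ℤ, m ≤ K → 0 ≤ Δ m := by
    intro m hm
    rcases le_or_gt m 0 with h | h
    · rw [h0 m h]
    · exact le_trans zero_le_one (h1 m h hm)
  set S2 := ∑ i ∈ Icc (1:ℤ) K, (Δ i)^2 with hS2def
  set S1 := ∑ i ∈ Icc (1:ℤ) K, Δ i with hS1def
  have hS2 : 0 ≤ S2 := Finset.sum_nonneg (fun i _ => sq_nonneg _)
  have hS1 : 0 ≤ S1 := Finset.sum_nonneg (fun i hi => hnn i (mem_Icc.mp hi).2)
  have hshift : ∀ j ∈ Icc (1:ℤ) (N-1), ∑ i ∈ Icc (1:ℤ) K, (Δ (i - j))^2 ≤ S2 := by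
    intro j hj
    obtain ⟨hj1, hj2⟩ := mem_Icc.mp hj
    have heq : ∑ i ∈ Icc (1:ℤ) K, (Δ (i - j))^2 = ∑ i ∈ Icc (1-j) (K-j), (Δ i)^2 := by
      rw [show Icc (1-j) (K-j) = (Icc (1:ℤ) K).map (addRightEmbedding (-j)) by
        rw [Finset.map_add_right_Icc]; ring_nf]
      rw [Finset.sum_map]
      apply Finset.sum_congr rfl
      intro i _
      simp [addRightEmbedding, sub_eq_add_neg]
    rw [heq]
    have hsub : ∑ i ∈ Icc (1-j) (K-j), (Δ i)^2
        = ∑ i ∈ (Icc (1-j) (K-j) ∩ Icc 1 K), (Δ i)^2 := by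
      apply (Finset.sum_subset inter_subset_left ?_).symm
      intro x hx hx'
      have hx1 := mem_Icc.mp hx
      have hno : ¬ (1 ≤ x ∧ x ≤ K) := by
        intro h; exact hx' (mem_inter.mpr ⟨hx, mem_Icc.mpr h⟩)
      have hx0 : x ≤ 0 := by omega
      rw [h0 x hx0]; ring
    rw [hsub]
    apply Finset.sum_le_sum_of_subset_of_nonneg inter_subset_right
    intro i _ _
    exact sq_nonneg _
  have key : ∀ i ∈ Icc (1:ℤ) K,
      (N : ℝ) * Δ i * (Δ i + 1) / 2 + Δ i * ∑ j ∈ Icc (1:ℤ) (N-1), ((N:ℝ) - (j:ℝ)) * Δ (i - j)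
      ≤ (N:ℝ) * (Δ i)^2 / 2 + (N:ℝ) * Δ i / 2
        + ∑ j ∈ Icc (1:ℤ) (N-1), ((N:ℝ) - (j:ℝ)) * ((Δ i)^2 + (Δ (i-j))^2) / 2 := by
    intro i hi
    have h2 : Δ i * ∑ j ∈ Icc (1:ℤ) (N-1), ((N:ℝ) - (j:ℝ)) * Δ (i - j)
        ≤ ∑ j ∈ Icc (1:ℤ) (N-1), ((N:ℝ) - (j:ℝ)) * ((Δ i)^2 + (Δ (i-j))^2) / 2 := by
      rw [Finset.mul_sum]
      apply Finset.sum_le_sum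
      intro j hj
      obtain ⟨hj1, hj2⟩ := mem_Icc.mp hj
      have hjN : j ≤ N := by omega
      have hNj : (0:ℝ) ≤ (N:ℝ) - (j:ℝ) := by
        have : (j:ℝ) ≤ (N:ℝ) := by exact_mod_cast hjN
        linarith
      nlinarith [sq_nonneg (Δ i - Δ (i - j))]
    nlinarith [h2]
  have hcard : ((Icc (1:ℤ) (N-1)).card : ℝ) = (N:ℝ) - 1 := by
    rw [Int.card_Icc]
    have h1 : ((N - 1 + 1 - 1).toNat : ℤ) = N - 1 := by omega
    have h2 : (((N - 1 + 1 - 1).toNat : ℤ) : ℝ) = (N:ℝ) - 1 := by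
      rw [h1]; push_cast; ring
    exact_mod_cast h2
  have hC : ∑ i ∈ Icc (1:ℤ) K, ∑ j ∈ Icc (1:ℤ) (N-1),
        ((N:ℝ) - (j:ℝ)) * ((Δ i)^2 + (Δ (i-j))^2) / 2
      ≤ ((N:ℝ) - 1) * ((N:ℝ) * S2) := by
    rw [Finset.sum_comm]
    calc ∑ j ∈ Icc (1:ℤ) (N-1), ∑ i ∈ Icc (1:ℤ) K,
            ((N:ℝ) - (j:ℝ)) * ((Δ i)^2 + (Δ (i-j))^2) / 2
        ≤ (Icc (1:ℤ) (N-1)).card • ((N:ℝ) * S2) := by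
          apply Finset.sum_le_card_nsmul
          intro j hj
          obtain ⟨hj1, hj2⟩ := mem_Icc.mp hj
          have hj1' : (1:ℝ) ≤ (j:ℝ) := by exact_mod_cast hj1
          have hT := hshift j hj
          have hTnn : 0 ≤ ∑ i ∈ Icc (1:ℤ) K, (Δ (i-j))^2 :=
            Finset.sum_nonneg fun i _ => sq_nonneg _
          have heq : ∑ i ∈ Icc (1:ℤ) K, ((N:ℝ) - (j:ℝ)) * ((Δ i)^2 + (Δ (i-j))^2) / 2
              = ((N:ℝ) - (j:ℝ))/2 * (S2 + ∑ i ∈ Icc (1:ℤ) K, (Δ (i-j))^2) := by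
            rw [hS2def, ← Finset.sum_add_distrib, Finset.mul_sum]
            apply Finset.sum_congr rfl; intro i _; ring
          rw [heq]
          have hNj : (0:ℝ) ≤ (N:ℝ) - (j:ℝ) := by
            have hjN : j ≤ N := by omega
            have : (j:ℝ) ≤ (N:ℝ) := by exact_mod_cast hjN
            linarith
          nlinarith [hT, hTnn, hS2]
      _ = ((N:ℝ) - 1) * ((N:ℝ) * S2) := by rw [nsmul_eq_mul, hcard]
  have hsum := Finset.sum_le_sum key
  refine le_trans hsum ?_
  have hsplit : ∑ i ∈ Icc (1:ℤ) K,
      ((N:ℝ) * (Δ i)^2 / 2 + (N:ℝ) * Δ i / 2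
        + ∑ j ∈ Icc (1:ℤ) (N-1), ((N:ℝ) - (j:ℝ)) * ((Δ i)^2 + (Δ (i-j))^2) / 2)
      = (N:ℝ) * S2 / 2 + (N:ℝ) * S1 / 2
        + ∑ i ∈ Icc (1:ℤ) K, ∑ j ∈ Icc (1:ℤ) (N-1),
            ((N:ℝ) - (j:ℝ)) * ((Δ i)^2 + (Δ (i-j))^2) / 2 := by
    rw [Finset.sum_add_distrib, Finset.sum_add_distrib, hS2def, hS1def,
      Finset.mul_sum, Finset.mul_sum, Finset.sum_div, Finset.sum_div]
  rw [hsplit]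
  have hR : ∑ i ∈ Icc (1:ℤ) K, ((Δ i)^2 / 2 + (N:ℝ) * Δ i) = S2 / 2 + (N:ℝ) * S1 := by
    rw [Finset.sum_add_distrib, hS2def, hS1def, Finset.mul_sum, Finset.sum_div]
  rw [hR]
  nlinarith [hS1, hS2, hN', mul_nonneg hS1 hS2, sq_nonneg ((N:ℝ)-1),
    mul_nonneg (mul_nonneg (le_trans zero_le_one hN') (le_trans zero_le_one hN')) hS1,
    mul_nonneg (le_trans zero_le_one hN') hS2,
    mul_nonneg (le_trans zero_le_one hN') hS1]
end

section
/- Let h, s : ℕ → ℝ be nonnegative sequences such that h(t + 1) ≥ 2 + (1/2)·h(t) + (1/2)·s(t) for all t ≥ 1, and such that (1/T)·Σ_{t=1}^{T} s(t) → 2 as T → ∞. Then limsup_{T→∞} (1/T)·Σ_{t=1}^{T} h(t) ≥ 6. -/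
/-!
Summing the drift inequality over `t ≤ T` shows that the averages `u T = (1/T) ∑_{t ≤ T} h t`
satisfy `u (T + 1) ≥ v T + w T * u T` with `v T → 2 + 2/2 = 3` and `w T → 1/2`. If the limsup `L`
of `u` is finite, `u` is bounded, and evaluating this recursion along a subsequence on which
`u → L` gives `3 + L/2 ≤ L`, that is `L ≥ 6`.
-/

open Filter Finset Topology

theorem Finset.sum_Icc_le_sum_Icc_succ {M : Type*} [AddCommMonoid M] [PartialOrder M]
    [IsOrderedAddMonoid M] {f g : ℕ → M} (hf : 0 ≤ f 1) (hfg : ∀ t, 1 ≤ t → g t ≤ f (t + 1))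
    (T : ℕ) : ∑ t ∈ Icc 1 T, g t ≤ ∑ t ∈ Icc 1 (T + 1), f t := by
  induction T with
  | zero => simpa using hf
  | succ T ih =>
    rw [sum_Icc_succ_top (by omega), sum_Icc_succ_top (by omega)]
    exact add_le_add ih (hfg _ (by omega))

theorem add_mul_limsup_le_limsup {u v w : ℕ → ℝ} {c l : ℝ}
    (hu : IsBoundedUnder (· ≤ ·) atTop u) (hu' : IsBoundedUnder (· ≥ ·) atTop u)
    (hv : Tendsto v atTop (𝓝 c)) (hw : Tendsto w atTop (𝓝 l))
    (hrec : ∀ᶠ n in atTop, v n + w n * u n ≤ u (n + 1)) :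
    c + l * limsup u atTop ≤ limsup u atTop := by
  obtain ⟨φ, hφ, huφ⟩ := (MapClusterPt.limsup hu'.isCoboundedUnder_flip hu).tendsto_subseq
  have hφ' := hφ.tendsto_atTop
  have hlim : Tendsto (fun k => v (φ k) + w (φ k) * u (φ k)) atTop
      (𝓝 (c + l * limsup u atTop)) :=
    (hv.comp hφ').add ((hw.comp hφ').mul huφ)
  refine le_of_forall_pos_le_add fun ε hε => le_of_tendsto hlim ?_
  have hnext : ∀ᶠ n in atTop, u (n + 1) < limsup u atTop + ε :=
    tendsto_add_atTop_nat 1 |>.eventually (eventually_lt_of_limsup_lt (by linarith) hu)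
  filter_upwards [hφ'.eventually hrec, hφ'.eventually hnext] with k h₁ h₂ using h₁.trans h₂.le

theorem le_limsup_coe_of_le_add_mul {u v w : ℕ → ℝ} {c l : ℝ} (hl : l < 1)
    (hu : IsBoundedUnder (· ≥ ·) atTop u)
    (hv : Tendsto v atTop (𝓝 c)) (hw : Tendsto w atTop (𝓝 l))
    (hrec : ∀ᶠ n in atTop, v n + w n * u n ≤ u (n + 1)) :
    ((c / (1 - l) : ℝ) : EReal) ≤ limsup (fun n => (u n : EReal)) atTop := by
  by_contra! hlt
  obtain ⟨r, hLr, hr⟩ := EReal.exists_between_coe_real hlt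
  have hur : ∀ᶠ n in atTop, u n ≤ r :=
    (eventually_lt_of_limsup_lt hLr).mono fun n hn => (EReal.coe_lt_coe_iff.mp hn).le
  have hfix := add_mul_limsup_le_limsup (isBoundedUnder_of_eventually_le hur) hu hv hw hrec
  have hLr' : limsup u atTop ≤ r := limsup_le_of_le hu.isCoboundedUnder_flip hur
  have hcr : c / (1 - l) ≤ r := by
    rw [div_le_iff₀ (sub_pos.2 hl)]
    nlinarith
  exact (EReal.coe_lt_coe_iff.mp hr).not_ge hcr

theorem stmt_15_general (h s : ℕ → ℝ) (hnn : ∀ t, 0 ≤ h t)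
    (hdrift : ∀ t : ℕ, 1 ≤ t → h (t + 1) ≥ 2 + (1 / 2) * h t + (1 / 2) * s t)
    (hs : Filter.Tendsto (fun T : ℕ => (1 / (T : ℝ)) * ∑ t ∈ Finset.Icc 1 T, s t)
            Filter.atTop (nhds 2)) :
    (6 : EReal) ≤
      Filter.limsup
        (fun T : ℕ => (((1 / (T : ℝ)) * ∑ t ∈ Finset.Icc 1 T, h t : ℝ) : EReal))
        Filter.atTop := by
  set u : ℕ → ℝ := fun T => (1 / (T : ℝ)) * ∑ t ∈ Icc 1 T, h t
  set σ : ℕ → ℝ := fun T => (1 / (T : ℝ)) * ∑ t ∈ Icc 1 T, s t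
  have hratio : Tendsto (fun T : ℕ => (T : ℝ) / (T + 1)) atTop (𝓝 1) :=
    tendsto_natCast_div_add_atTop 1
  have hrec : ∀ᶠ T : ℕ in atTop,
      (T : ℝ) / (T + 1) * (2 + σ T / 2) + (T : ℝ) / (T + 1) / 2 * u T ≤ u (T + 1) := by
    filter_upwards [eventually_ge_atTop 1] with T hT
    have hsum : 2 * T + 1 / 2 * ∑ t ∈ Icc 1 T, h t + 1 / 2 * ∑ t ∈ Icc 1 T, s t ≤
        ∑ t ∈ Icc 1 (T + 1), h t := by
      have := sum_Icc_le_sum_Icc_succ (hnn 1) (fun t ht => (hdrift t ht).le) T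
      rwa [sum_add_distrib, sum_add_distrib, sum_const, Nat.card_Icc, Nat.add_sub_cancel,
        nsmul_eq_mul, ← mul_sum, ← mul_sum, mul_comm] at this
    have hT₀ : (T : ℝ) ≠ 0 := Nat.cast_ne_zero.2 (by omega)
    simp only [u, σ, Nat.cast_add, Nat.cast_one]
    field_simp
    linarith
  have hu : IsBoundedUnder (· ≥ ·) atTop u := isBoundedUnder_of_eventually_ge
    (.of_forall fun T => mul_nonneg (by positivity) (sum_nonneg fun t _ => hnn t))
  have h6 := le_limsup_coe_of_le_add_mul (by norm_num) hu
    (hratio.mul (tendsto_const_nhds.add (hs.div_const 2))) (hratio.div_const 2) hrec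
  rw [show (1 * (2 + 2 / 2) / (1 - 1 / 2) : ℝ) = 6 by norm_num] at h6
  exact_mod_cast h6

theorem stmt_15 (h s : ℕ → ℝ) (hnn : ∀ t, 0 ≤ h t) (snn : ∀ t, 0 ≤ s t)
    (hdrift : ∀ t : ℕ, 1 ≤ t → h (t + 1) ≥ 2 + (1 / 2) * h t + (1 / 2) * s t)
    (hs : Filter.Tendsto (fun T : ℕ => (1 / (T : ℝ)) * ∑ t ∈ Finset.Icc 1 T, s t)
            Filter.atTop (nhds 2)) :
    (6 : EReal) ≤
      Filter.limsup
        (fun T : ℕ => (((1 / (T : ℝ)) * ∑ t ∈ Finset.Icc 1 T, h t : ℝ) : EReal))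
        Filter.atTop :=
  stmt_15_general h s hnn hdrift hs
end

section
/- Let T ≥ 1 and K ≥ 0 be integers and let 0 = t_0 < t_1 < t_2 < ⋯ < t_K ≤ T be integers. Define h(t) = t − max{ t_j : 0 ≤ j ≤ K, t_j < t } for 1 ≤ t ≤ T. Then Σ_{t=1}^{T} h(t) ≥ T²/(2(K + 1)) + T/2. -/
/-!
Between consecutive receptions `t j < t (j + 1)` the age runs through `1, …, d_j` with
`d_j = t (j + 1) - t j` (the last renewal interval ending at `T`), so the cumulative age is
`∑ d_j (d_j + 1) / 2`. The `K + 1` gaps sum to `T`, and by Cauchy–Schwarz (Jensen for `x ↦ x²`)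
`∑ d_j² ≥ T² / (K + 1)`.
-/

open Finset

theorem Finset.sum_Ioc_eq_sum_range_sum_Ioc {M : Type*} [AddCommMonoid M] {a : ℕ → ℕ}
    (ha : Monotone a) (f : ℕ → M) (n : ℕ) :
    ∑ s ∈ Ioc (a 0) (a n), f s = ∑ j ∈ range n, ∑ s ∈ Ioc (a j) (a (j + 1)), f s := by
  induction n with
  | zero => simp
  | succ n ih =>
    rw [sum_range_succ, ← ih, sum_Ioc_consecutive _ (ha n.zero_le) (ha n.le_succ)]

theorem Finset.sum_Ioc_natCast_sub {a b : ℕ} (hab : a ≤ b) :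
    ∑ s ∈ Ioc a b, ((s : ℝ) - a) = ((b : ℝ) - a) * ((b : ℝ) - a + 1) / 2 := by
  induction b, hab using Nat.le_induction with
  | base => simp
  | succ b hab ih =>
    rw [sum_Ioc_succ_top hab, ih]
    push_cast
    ring

theorem Finset.sq_sum_div_card_le_sum_sq {ι : Type*} (s : Finset ι) (x : ι → ℝ) :
    (∑ i ∈ s, x i) ^ 2 / #s ≤ ∑ i ∈ s, x i ^ 2 := by
  simpa using sq_sum_div_le_sum_sq_div s x (g := fun _ => 1) fun _ _ => one_pos

theorem Finset.sq_sum_div_two_card_add_sum_div_two_le {ι : Type*} (s : Finset ι) (x : ι → ℝ) :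
    (∑ i ∈ s, x i) ^ 2 / (2 * #s) + (∑ i ∈ s, x i) / 2 ≤ ∑ i ∈ s, x i * (x i + 1) / 2 := by
  have hsplit : ∑ i ∈ s, x i * (x i + 1) / 2 = (∑ i ∈ s, x i ^ 2 + ∑ i ∈ s, x i) / 2 := by
    rw [← sum_add_distrib, sum_div]
    exact sum_congr rfl fun _ _ => by ring
  rw [hsplit, mul_comm, ← div_div]
  linarith [sq_sum_div_card_le_sum_sq s x]

theorem sup_filter_lt_eq_of_lt_of_le_succ {K j s : ℕ} {t : ℕ → ℕ} (ht : MonotoneOn t (Set.Iic K))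
    (hj : j ≤ K) (hs : t j < s) (hs' : j < K → s ≤ t (j + 1)) :
    ((range (K + 1)).filter (fun i => t i < s)).sup t = t j := by
  refine le_antisymm (Finset.sup_le fun i hi => ?_) (le_sup (by simp [hs, Nat.lt_succ_of_le hj]))
  simp only [mem_filter, mem_range, Nat.lt_succ_iff] at hi
  obtain hij | hji := le_or_gt i j
  · exact ht hi.1 hj hij
  · have : t (j + 1) ≤ t i := ht (show j + 1 ≤ K by omega) hi.1 hji
    have := hs' (by omega)
    omega

def renewalTimes (t : ℕ → ℕ) (K T : ℕ) (j : ℕ) : ℕ := if j ≤ K then t j else T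

section Renewal

variable {t : ℕ → ℕ} {K T : ℕ}

theorem renewalTimes_of_le {j : ℕ} (hj : j ≤ K) : renewalTimes t K T j = t j := if_pos hj

theorem renewalTimes_succ_self : renewalTimes t K T (K + 1) = T :=
  if_neg (Nat.not_succ_le_self K)

theorem monotone_renewalTimes (hmono : ∀ j < K, t j ≤ t (j + 1)) (hK : t K ≤ T) :
    Monotone (renewalTimes t K T) := monotone_nat_of_le_succ fun j => by
  unfold renewalTimes
  split_ifs with hj hj'
  · exact hmono j hj'
  · obtain rfl : j = K := by omega
    exact hK
  · omega
  · rfl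

theorem sum_Icc_age_eq_sum_gaps (h0 : t 0 = 0) (hmono : ∀ j < K, t j ≤ t (j + 1))
    (hK : t K ≤ T) :
    ∑ s ∈ Icc 1 T, ((s : ℝ) - (((range (K + 1)).filter (fun j => t j < s)).sup t : ℕ)) =
      ∑ j ∈ range (K + 1), ((renewalTimes t K T (j + 1) : ℝ) - renewalTimes t K T j) *
        ((renewalTimes t K T (j + 1) : ℝ) - renewalTimes t K T j + 1) / 2 := by
  set a := renewalTimes t K T
  have hat : ∀ j ≤ K, a j = t j := fun _ => renewalTimes_of_le
  have ha : Monotone a := monotone_renewalTimes hmono hK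
  have ht : MonotoneOn t (Set.Iic K) := fun i hi j hj hij => by
    rw [← hat i hi, ← hat j hj]; exact ha hij
  have hage : ∀ j ∈ range (K + 1), ∀ s ∈ Ioc (a j) (a (j + 1)),
      (s : ℝ) - (((range (K + 1)).filter (fun i => t i < s)).sup t : ℕ) = s - a j := by
    intro j hj s hs
    rw [mem_range, Nat.lt_succ_iff] at hj
    rw [mem_Ioc, hat j hj] at hs
    rw [sup_filter_lt_eq_of_lt_of_le_succ ht hj hs.1 fun hjK => hat _ hjK ▸ hs.2, hat j hj]
  have hIcc : Icc 1 T = Ioc (a 0) (a (K + 1)) := by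
    rw [hat 0 K.zero_le, h0, show a (K + 1) = T from renewalTimes_succ_self,
      ← Icc_add_one_left_eq_Ioc, zero_add]
  rw [hIcc, sum_Ioc_eq_sum_range_sum_Ioc ha]
  exact sum_congr rfl fun j hj => by
    rw [sum_congr rfl (hage j hj), sum_Ioc_natCast_sub (ha j.le_succ)]

end Renewal

theorem stmt_19_general (T K : ℕ) (t : ℕ → ℕ)
    (h0 : t 0 = 0) (hmono : ∀ j, j < K → t j < t (j + 1)) (hK : t K ≤ T) :
    ∑ s ∈ Finset.Icc 1 T,
        ((s : ℝ) - ((((Finset.range (K + 1)).filter (fun j => t j < s)).sup t : ℕ) : ℝ)) ≥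
      (T : ℝ) ^ 2 / (2 * ((K : ℝ) + 1)) + (T : ℝ) / 2 := by
  rw [sum_Icc_age_eq_sum_gaps h0 (fun j hj => (hmono j hj).le) hK, ge_iff_le]
  have hgaps := sq_sum_div_two_card_add_sum_div_two_le (range (K + 1))
    fun j => (renewalTimes t K T (j + 1) : ℝ) - renewalTimes t K T j
  rwa [sum_range_sub (fun j => (renewalTimes t K T j : ℝ)), card_range, renewalTimes_succ_self,
    renewalTimes_of_le K.zero_le, h0, Nat.cast_zero, sub_zero, Nat.cast_succ] at hgaps

theorem stmt_19 (T K : ℕ) (hT : 1 ≤ T) (t : ℕ → ℕ)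
    (h0 : t 0 = 0) (hmono : ∀ j, j < K → t j < t (j + 1)) (hK : t K ≤ T) :
    ∑ s ∈ Finset.Icc 1 T,
        ((s : ℝ) - ((((Finset.range (K + 1)).filter (fun j => t j < s)).sup t : ℕ) : ℝ)) ≥
      (T : ℝ) ^ 2 / (2 * ((K : ℝ) + 1)) + (T : ℝ) / 2 :=
  stmt_19_general T K t h0 hmono hK
end
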